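/- arXiv:1305.0778 — 2 statements merged into one kernel-verified Lean document; each statement's English description precedes it below -/
import Mathlib

section
/- Let n ≥ 1, k > n, and N ≥ 1, and let M(z) = (1 − z)(1 + z^k + z^{2k} + ⋯ + z^{(N−1)k}) ∈ ℤ[z]. Then M has constant term 1, every coefficient of M is ≥ −1, and with U_n(z) = 1 + z + ⋯ + z^{n−1}, the Laurent polynomial E(z) = M(z)·U_n(z)·U_n(z^{−1}) − U_n(z^{−1}) has constant coefficient equal to 0. (Hence M satisfies all hypotheses of the main limit theorem.) -/
/-!
STATEMENT 7: For n ≥ 1, k > n, N ≥ 1, the polynomial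
M(z) = (1 − z)(1 + z^k + ⋯ + z^{(N−1)k}) has constant term 1, all coefficients ≥ −1,
and the Laurent polynomial E = M·U_n·U_n^* − U_n^* has constant coefficient 0,
where U_n(z) = 1 + z + ⋯ + z^{n−1} and U_n^* = U_n(z^{−1}).
-/

noncomputable section

/-- View a Laurent polynomial (an element of `AddMonoidAlgebra R ℤ`) as a
finitely supported function `ℤ →₀ R`, giving access to its coefficients. -/
def lpCoeff {R : Type*} [Semiring R] (p : LaurentPolynomial R) : ℤ →₀ R := p.coeff

lemma lp_T_apply (m : ℤ) : lpCoeff (LaurentPolynomial.T m : LaurentPolynomial ℤ) 0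
    = if m = 0 then 1 else 0 := by
  unfold lpCoeff
  rw [LaurentPolynomial.T_apply]

lemma lp_sum_apply (s : Finset ℕ) (f : ℕ → LaurentPolynomial ℤ) :
    lpCoeff (∑ i ∈ s, f i) 0 = ∑ i ∈ s, lpCoeff (f i) 0 :=
  by unfold lpCoeff; rw [AddMonoidAlgebra.coeff_sum]; exact Finset.sum_apply' 0

lemma lp_sub_apply (p q : LaurentPolynomial ℤ) :
    lpCoeff (p - q) 0 = lpCoeff p 0 - lpCoeff q 0 :=
  by unfold lpCoeff; rw [AddMonoidAlgebra.coeff_sub]; exact Finsupp.sub_apply _ _ 0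

theorem macdonald_paper_stmt7 (n k N : ℕ) (hn : 1 ≤ n) (hk : n < k) (hN : 1 ≤ N) :
    let M : Polynomial ℤ := (1 - Polynomial.X) * ∑ i ∈ Finset.range N, Polynomial.X ^ (i * k)
    let U : LaurentPolynomial ℤ := ∑ i ∈ Finset.range n, LaurentPolynomial.T (i : ℤ)
    let Ustar : LaurentPolynomial ℤ := ∑ i ∈ Finset.range n, LaurentPolynomial.T (-(i : ℤ))
    let E : LaurentPolynomial ℤ := Polynomial.toLaurent M * U * Ustar - Ustar
    M.coeff 0 = 1 ∧ (∀ a : ℕ, -1 ≤ M.coeff a) ∧ lpCoeff E 0 = 0 := by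
  intro M U Ustar E
  have hk0 : 0 < k := lt_of_le_of_lt (Nat.zero_le n) hk
  set S : Polynomial ℤ := ∑ i ∈ Finset.range N, Polynomial.X ^ (i * k) with hS
  have hScoeff : ∀ a : ℕ, S.coeff a = ∑ i ∈ Finset.range N, if a = i * k then 1 else 0 := by
    intro a
    rw [hS, Polynomial.finset_sum_coeff]
    simp [Polynomial.coeff_X_pow]
  -- coefficients of S are between 0 and 1
  have hS0 : ∀ a : ℕ, 0 ≤ S.coeff a := by
    intro a; rw [hScoeff]
    exact Finset.sum_nonneg fun i _ => by positivity
  have hS1 : ∀ a : ℕ, S.coeff a ≤ 1 := by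
    intro a; rw [hScoeff, Finset.sum_boole]
    norm_cast
    apply Finset.card_le_one.mpr
    intro i hi j hj
    simp only [Finset.mem_filter] at hi hj
    exact Nat.eq_of_mul_eq_mul_right hk0 (hi.2 ▸ hj.2)
  have hM0 : M.coeff 0 = 1 := by
    rw [show M = (1 - Polynomial.X) * S from rfl, Polynomial.mul_coeff_zero, hScoeff]
    have : ∀ i ∈ Finset.range N, (if (0:ℕ) = i * k then (1:ℤ) else 0) = if i = 0 then 1 else 0 := by
      intro i _
      congr 1
      simp [eq_comm, Nat.mul_eq_zero, hk0.ne']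
    rw [Finset.sum_congr rfl this, Finset.sum_ite_eq' (Finset.range N) 0 (fun _ => (1:ℤ))]
    simp only [Finset.mem_range]
    rw [if_pos (by omega)]
    simp
  refine ⟨hM0, ?_, ?_⟩
  · intro a
    cases a with
    | zero => rw [hM0]; norm_num
    | succ b =>
      have : M.coeff (b+1) = S.coeff (b+1) - S.coeff b := by
        rw [show M = (1 - Polynomial.X) * S from rfl, sub_mul, one_mul,
          Polynomial.coeff_sub, Polynomial.coeff_X_mul]
      rw [this]
      have := hS0 (b+1); have := hS1 b; linarith
  · -- constant coefficient of E
    have hU : U = Polynomial.toLaurent (∑ i ∈ Finset.range n, Polynomial.X ^ i) := by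
      rw [map_sum]
      exact Finset.sum_congr rfl fun i _ => (Polynomial.toLaurent_X_pow i).symm
    have hgeo : ((1:Polynomial ℤ) - Polynomial.X) * ∑ i ∈ Finset.range n, Polynomial.X ^ i
        = 1 - Polynomial.X ^ n := by
      have h := geom_sum_mul (Polynomial.X : Polynomial ℤ) n
      linear_combination -h
    have hMU : Polynomial.toLaurent M * U
        = ∑ i ∈ Finset.range N, (LaurentPolynomial.T ((i*k : ℕ) : ℤ)
            - LaurentPolynomial.T ((i*k : ℕ) + (n : ℕ))) := by
      rw [hU, ← map_mul]
      have : M * ∑ i ∈ Finset.range n, Polynomial.X ^ i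
          = ∑ i ∈ Finset.range N, (Polynomial.X ^ (i*k) - Polynomial.X ^ (i*k+n)) := by
        rw [show M = (1 - Polynomial.X) * S from rfl, mul_comm _ S, mul_assoc, hgeo, hS,
          Finset.sum_mul]
        exact Finset.sum_congr rfl fun i _ => by ring
      rw [this, map_sum]
      refine Finset.sum_congr rfl fun i _ => ?_
      rw [map_sub, Polynomial.toLaurent_X_pow, Polynomial.toLaurent_X_pow]
      push_cast
      ring_nf
    have hE : E = (∑ i ∈ Finset.range N, ∑ j ∈ Finset.range n,
        ((LaurentPolynomial.T ((i*k : ℕ) - (j:ℤ)) - LaurentPolynomial.T ((i*k : ℕ) + n - (j:ℤ)) : LaurentPolynomial ℤ)))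
        - Ustar := by
      show Polynomial.toLaurent M * U * Ustar - Ustar = _
      rw [hMU, Finset.sum_mul]
      congr 1
      refine Finset.sum_congr rfl fun i _ => ?_
      rw [show Ustar = ∑ j ∈ Finset.range n, LaurentPolynomial.T (-(j:ℤ)) from rfl,
        Finset.mul_sum]
      refine Finset.sum_congr rfl fun j _ => ?_
      rw [sub_mul, ← LaurentPolynomial.T_add, ← LaurentPolynomial.T_add]
      ring_nf
    rw [show E = Polynomial.toLaurent M * U * Ustar - Ustar from rfl] at hE ⊢
    rw [hE, lp_sub_apply, lp_sum_apply]
    have hUstar : lpCoeff Ustar 0 = 1 := by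
      rw [show Ustar = ∑ j ∈ Finset.range n, LaurentPolynomial.T (-(j:ℤ)) from rfl,
        lp_sum_apply]
      have this1 : ∀ j ∈ Finset.range n, lpCoeff (LaurentPolynomial.T (-(j:ℤ)) : LaurentPolynomial ℤ) 0
          = if j = 0 then (1:ℤ) else 0 := by
        intro j _
        rw [lp_T_apply]
        simp
      refine (Finset.sum_congr rfl this1).trans ?_
      rw [Finset.sum_ite_eq' (Finset.range n) 0 (fun _ => (1:ℤ))]
      simp only [Finset.mem_range]
      rw [if_pos (by omega)]
    rw [hUstar]
    have hmain : ∀ i ∈ Finset.range N, lpCoeff (∑ j ∈ Finset.range n,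
        ((LaurentPolynomial.T ((i*k : ℕ) - (j:ℤ)) - LaurentPolynomial.T ((i*k : ℕ) + n - (j:ℤ)) : LaurentPolynomial ℤ))) 0
        = if i = 0 then 1 else 0 := by
      intro i hi
      rw [lp_sum_apply]
      have : ∀ j ∈ Finset.range n, lpCoeff
          ((LaurentPolynomial.T ((i*k : ℕ) - (j:ℤ)) - LaurentPolynomial.T ((i*k : ℕ) + n - (j:ℤ))) : LaurentPolynomial ℤ) 0
          = if i = 0 ∧ j = 0 then (1:ℤ) else 0 := by
        intro j hj
        rw [lp_sub_apply, lp_T_apply, lp_T_apply]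
        have hj' : j < n := Finset.mem_range.mp hj
        have h2 : ¬ ((i*k : ℕ) + (n:ℤ) - (j:ℤ) = 0) := by
          have : (j:ℤ) < n := by exact_mod_cast hj'
          have : (0:ℤ) ≤ (i*k : ℕ) := Int.natCast_nonneg _
          omega
        rw [if_neg h2, sub_zero]
        by_cases h : i = 0 ∧ j = 0
        · rw [if_pos h, if_pos]; rw [h.1, h.2]; norm_num
        · rw [if_neg h, if_neg]
          intro habs
          have hik : (i*k : ℕ) = j := by omega
          rcases Nat.eq_zero_or_pos i with hi0 | hi1
          · refine h ⟨hi0, ?_⟩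
            rw [hi0, zero_mul] at hik
            omega
          · have : k ≤ i * k := Nat.le_mul_of_pos_left k hi1
            omega
      refine (Finset.sum_congr rfl this).trans ?_
      by_cases hi0 : i = 0
      · simp only [hi0, true_and]
        rw [Finset.sum_ite_eq' (Finset.range n) 0 (fun _ => (1:ℤ)), if_pos]
        · simp
        · simp only [Finset.mem_range]; omega
      · simp [hi0]
    have h2 : ∑ i ∈ Finset.range N, lpCoeff (∑ j ∈ Finset.range n,
        ((LaurentPolynomial.T ((i*k : ℕ) - (j:ℤ)) - LaurentPolynomial.T ((i*k : ℕ) + n - (j:ℤ)) : LaurentPolynomial ℤ))) 0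
        = 1 := by
      refine (Finset.sum_congr rfl hmain).trans ?_
      rw [Finset.sum_ite_eq' (Finset.range N) 0 (fun _ => (1:ℤ))]
      simp only [Finset.mem_range]
      rw [if_pos (by omega)]
    rw [h2]
    ring
end
end

section
/- Let ν be a partition and n ≥ ℓ(ν) an integer, with ν_j := 0 for j > ℓ(ν). Then in ℤ[q,t]: (1 − q)·Σ_{s∈ν} q^{a(s)}·(1 + t + ⋯ + t^{l(s)−1}) = Σ_{1≤i<j≤n} t^{j−i−1}·q^{ν_i−ν_j}·(1 − q^{ν_j}). -/
/-!
STATEMENT 9: For a partition ν with at most n parts (ν_j = 0 for j beyond its length),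
as an identity in ℤ[q,t]:
(1 − q)·Σ_{s∈ν} q^{a(s)}·(1 + t + ⋯ + t^{l(s)−1}) = Σ_{1≤i<j≤n} t^{j−i−1}·q^{ν_i−ν_j}·(1 − q^{ν_j}).
Here cells are indexed (0-based) by a row i < n and a column c < ν i, with
arm a(s) = ν i − c − 1 and leg l(s) = #{i' | i < i' ∧ c < ν i'}.
-/

open Finset

noncomputable section

theorem macdonald_paper_stmt9 (n : ℕ) (hn : 1 ≤ n) (ν : ℕ → ℕ) (hmono : Antitone ν)
    (hlen : ∀ i, n ≤ i → ν i = 0) :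
    let q : MvPolynomial (Fin 2) ℤ := MvPolynomial.X 0
    let t : MvPolynomial (Fin 2) ℤ := MvPolynomial.X 1
    (1 - q) *
        ∑ i ∈ range n, ∑ c ∈ range (ν i),
          q ^ (ν i - c - 1) *
            ∑ r ∈ range (((range n).filter (fun i' => i < i' ∧ c < ν i')).card), t ^ r
      = ∑ i ∈ range n, ∑ j ∈ range n,
          if i < j then t ^ (j - i - 1) * q ^ (ν i - ν j) * (1 - q ^ ν j) else 0 := by
  intro q t
  set K : ℕ → ℕ := fun c => sInf {x | ν x ≤ c} with hK
  have hKmem : ∀ c, ν (K c) ≤ c := fun c =>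
    Nat.sInf_mem (⟨n, show ν n ≤ c by rw [hlen n le_rfl]; exact Nat.zero_le c⟩ :
      Set.Nonempty {x | ν x ≤ c})
  have hKlt : ∀ c j, c < ν j ↔ j < K c := by
    intro c j
    constructor
    · intro h
      by_contra hc
      push_neg at hc
      exact absurd (le_trans (hmono hc) (hKmem c)) (not_le_of_gt h)
    · intro h
      by_contra hc
      push_neg at hc
      exact absurd (Nat.sInf_le (show j ∈ {x | ν x ≤ c} from hc)) (not_le_of_gt h)
  have hKn : ∀ c, K c ≤ n := fun c =>
    Nat.sInf_le (show n ∈ {x | ν x ≤ c} by simp only [Set.mem_setOf_eq, hlen n le_rfl]; exact Nat.zero_le c)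
  have hfilter : ∀ i c, (range n).filter (fun i' => i < i' ∧ c < ν i') = Ioo i (K c) := by
    intro i c
    ext j
    simp only [mem_filter, mem_range, mem_Ioo, hKlt c j]
    exact ⟨fun ⟨_, h2, h3⟩ => ⟨h2, h3⟩, fun ⟨h1, h2⟩ => ⟨lt_of_lt_of_le h2 (hKn c), h1, h2⟩⟩
  have hinner : ∀ i c,
      (∑ r ∈ range (((range n).filter (fun i' => i < i' ∧ c < ν i')).card), t ^ r)
        = ∑ j ∈ range n, if i < j ∧ c < ν j then t ^ (j - i - 1) else 0 := by
    intro i c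
    rw [← sum_filter, hfilter i c, Nat.card_Ioo, ← Finset.Ico_add_one_left_eq_Ioo,
      Finset.sum_Ico_eq_sum_range]
    apply Finset.sum_congr (by congr 1)
    intro r _
    congr 1
    omega
  -- transform LHS into triple sum
  rw [Finset.mul_sum]
  rw [show (∑ i ∈ range n, (1-q) * ∑ c ∈ range (ν i),
        q ^ (ν i - c - 1) *
          ∑ r ∈ range (((range n).filter (fun i' => i < i' ∧ c < ν i')).card), t ^ r)
      = ∑ i ∈ range n, ∑ j ∈ range n, ∑ c ∈ range (ν i),
          (if i < j ∧ c < ν j then (1-q) * q ^ (ν i - c - 1) * t ^ (j - i - 1) else 0) from ?_]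
  · -- outer reduction: fix i, j
    apply Finset.sum_congr rfl
    intro i hi
    apply Finset.sum_congr rfl
    intro j hj
    by_cases hij : i < j
    · have hνji : ν j ≤ ν i := hmono (le_of_lt hij)
      simp only [hij, if_true, true_and]
      rw [← Finset.sum_filter]
      have : (range (ν i)).filter (fun c => c < ν j) = range (ν j) := by
        ext c; simp only [mem_filter, mem_range]; omega
      rw [this]
      -- Σ_{c < ν j} (1-q) q^(ν i - c - 1) t^(j-i-1) = t^(j-i-1) q^(νi-νj) (1 - q^(νj))
      have hrefl : ∑ c ∈ range (ν j), (1-q) * q ^ (ν i - c - 1) * t ^ (j - i - 1)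
          = ∑ c ∈ range (ν j), (1-q) * (q ^ (ν i - ν j) * q ^ c) * t ^ (j - i - 1) := by
        rw [← Finset.sum_range_reflect (fun c => (1-q) * (q ^ (ν i - ν j) * q ^ c) * t ^ (j - i - 1)) (ν j)]
        apply Finset.sum_congr rfl
        intro c hc
        rw [mem_range] at hc
        rw [← pow_add, show ν i - ν j + (ν j - 1 - c) = ν i - c - 1 by omega]
      rw [hrefl]
      have hg := geom_sum_mul q (ν j)
      calc ∑ c ∈ range (ν j), (1-q) * (q ^ (ν i - ν j) * q ^ c) * t ^ (j - i - 1)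
          = ((∑ c ∈ range (ν j), q ^ c) * (q - 1)) * (-(q ^ (ν i - ν j) * t ^ (j - i - 1))) := by
            rw [Finset.sum_mul, Finset.sum_mul]
            apply Finset.sum_congr rfl
            intro c _
            ring
        _ = (q ^ (ν j) - 1) * (-(q ^ (ν i - ν j) * t ^ (j - i - 1))) := by rw [hg]
        _ = t ^ (j - i - 1) * q ^ (ν i - ν j) * (1 - q ^ ν j) := by ring
    · simp [hij]
  · -- LHS triple-sum transformation
    apply Finset.sum_congr rfl
    intro i hi
    rw [Finset.mul_sum, Finset.sum_comm]
    apply Finset.sum_congr rfl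
    intro c hc
    rw [hinner i c, Finset.mul_sum, Finset.mul_sum]
    apply Finset.sum_congr rfl
    intro j hj
    split_ifs <;> ring
end
end
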